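/- arXiv:1602.03923 — 6 statements merged into one kernel-verified Lean document; each statement's English description precedes it below -/
import Mathlib

section
/- Let n ≥ 1 and let G be a subgroup of GL(n,ℝ) containing two distinct scalar matrices (equivalently, there exists c ∈ ℝ, c ≠ 0, c ≠ 1, with c·I ∈ G). Then every G-invariant bilinear map T : ℝⁿ × ℝⁿ → ℝⁿ vanishes identically. -/
open Matrix

/-- If a subgroup `G` of `GL(n,ℝ)` contains a scalar matrix `c • 1` with
`c ≠ 0`, `c ≠ 1` (i.e. `G` contains two distinct scalar matrices), then every
`G`-invariant bilinear map `T : ℝⁿ × ℝⁿ → ℝⁿ` vanishes. -/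
theorem stmt_0 (n : ℕ) (hn : 1 ≤ n)
    (G : Subgroup (GL (Fin n) ℝ))
    (c : ℝ) (hc0 : c ≠ 0) (hc1 : c ≠ 1)
    (g₀ : GL (Fin n) ℝ) (hg₀G : g₀ ∈ G)
    (hg₀ : (g₀ : Matrix (Fin n) (Fin n) ℝ) = c • (1 : Matrix (Fin n) (Fin n) ℝ))
    (T : (Fin n → ℝ) →ₗ[ℝ] (Fin n → ℝ) →ₗ[ℝ] (Fin n → ℝ))
    (hT : ∀ g ∈ G, ∀ u v : Fin n → ℝ,
      (g : Matrix (Fin n) (Fin n) ℝ) *ᵥ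
        (T (((g⁻¹ : GL (Fin n) ℝ) : Matrix (Fin n) (Fin n) ℝ) *ᵥ u)
           (((g⁻¹ : GL (Fin n) ℝ) : Matrix (Fin n) (Fin n) ℝ) *ᵥ v)) = T u v) :
    T = 0 := by
  have hinv : ((g₀⁻¹ : GL (Fin n) ℝ) : Matrix (Fin n) (Fin n) ℝ)
      = c⁻¹ • (1 : Matrix (Fin n) (Fin n) ℝ) := by
    have h1 : ((g₀⁻¹ : GL (Fin n) ℝ) : Matrix (Fin n) (Fin n) ℝ) *
        ((g₀ : GL (Fin n) ℝ) : Matrix (Fin n) (Fin n) ℝ) = 1 := by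
      rw [← Units.val_mul, inv_mul_cancel, Units.val_one]
    calc ((g₀⁻¹ : GL (Fin n) ℝ) : Matrix (Fin n) (Fin n) ℝ)
        = c⁻¹ • (((g₀⁻¹ : GL (Fin n) ℝ) : Matrix (Fin n) (Fin n) ℝ) *
            (c • (1 : Matrix (Fin n) (Fin n) ℝ))) := by
          rw [Matrix.mul_smul, Matrix.mul_one, smul_smul, inv_mul_cancel₀ hc0, one_smul]
      _ = c⁻¹ • (1 : Matrix (Fin n) (Fin n) ℝ) := by rw [← hg₀, h1]
  apply LinearMap.ext; intro u; apply LinearMap.ext; intro v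
  have h := hT g₀ hg₀G u v
  rw [hg₀, hinv] at h
  simp only [Matrix.smul_mulVec, Matrix.one_mulVec, _root_.map_smul,
    LinearMap.smul_apply, smul_smul] at h
  have hc : c * (c⁻¹ * c⁻¹) = c⁻¹ := by field_simp
  rw [hc] at h
  have : (c⁻¹ - 1) • T u v = 0 := by
    rw [sub_smul, one_smul, h, sub_self]
  have hne : c⁻¹ - 1 ≠ 0 := by
    intro h'
    exact hc1 (inv_eq_one.mp (sub_eq_zero.mp h'))
  simp [smul_eq_zero, hne] at this
  simpa using this
end

section
/- Let n ≥ 2 and let R : ℝⁿ × ℝⁿ × ℝⁿ × ℝⁿ → ℝ be a quadrilinear map (linear in each argument) satisfying: (a) R(u₁,u₂,u₃,u₄) = −R(u₂,u₁,u₃,u₄); (b) R(u₁,u₂,u₃,u₄) = −R(u₁,u₂,u₄,u₃); (c) R(u₁,u₂,u₃,u₄) + R(u₁,u₃,u₄,u₂) + R(u₁,u₄,u₂,u₃) = 0, for all u₁,u₂,u₃,u₄ ∈ ℝⁿ. If R is SO(n)-invariant, i.e. R(g·u₁, g·u₂, g·u₃, g·u₄) = R(u₁,u₂,u₃,u₄)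 for every g ∈ SO(n) and all u₁,u₂,u₃,u₄ ∈ ℝⁿ, then there exists λ ∈ ℝ such that R = λ·K, where K(u₁,u₂,u₃,u₄) = ⟨u₂,u₃⟩⟨u₁,u₄⟩ − ⟨u₁,u₃⟩⟨u₂,u₄⟩. -/
open Matrix

variable {n : ℕ}

noncomputable def sgmat (σ : Equiv.Perm (Fin n)) (ε : Fin n → ℝ) : Matrix (Fin n) (Fin n) ℝ :=
  (σ⁻¹ : Equiv.Perm (Fin n)).permMatrix ℝ * Matrix.diagonal ε

lemma sgmat_mulVec_single (σ : Equiv.Perm (Fin n)) (ε : Fin n → ℝ) (m : Fin n) :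
    sgmat σ ε *ᵥ Pi.single m 1 = ε m • (Pi.single (σ m) 1 : Fin n → ℝ) := by
  rw [sgmat, ← Matrix.mulVec_mulVec, Matrix.diagonal_mulVec_single]
  ext i
  simp [Equiv.Perm.permMatrix, PEquiv.toMatrix, Equiv.toPEquiv_apply, Pi.single_apply,
    eq_comm (a := i)]
  congr 1
  rw [eq_iff_iff]; constructor <;> rintro rfl <;> simp

lemma sgmat_orth (σ : Equiv.Perm (Fin n)) (ε : Fin n → ℝ) (hε : ∀ m, ε m = 1 ∨ ε m = -1) :
    (sgmat σ ε)ᵀ * sgmat σ ε = 1 := by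
  have hP : ((σ⁻¹ : Equiv.Perm (Fin n)).permMatrix ℝ)ᵀ *
      (σ⁻¹ : Equiv.Perm (Fin n)).permMatrix ℝ = 1 := by
    rw [Equiv.Perm.permMatrix, ← PEquiv.toMatrix_symm, ← PEquiv.toMatrix_trans]
    rw [← Equiv.toPEquiv_symm, ← Equiv.toPEquiv_trans]
    simp
  rw [sgmat, Matrix.transpose_mul, Matrix.diagonal_transpose, Matrix.mul_assoc,
    ← Matrix.mul_assoc _ _ (Matrix.diagonal ε), hP, Matrix.one_mul,
    Matrix.diagonal_mul_diagonal]
  convert Matrix.diagonal_one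
  rcases hε _ with h | h <;> rw [h] <;> norm_num

lemma sgmat_det (σ : Equiv.Perm (Fin n)) (ε : Fin n → ℝ) :
    (sgmat σ ε).det = (Equiv.Perm.sign σ : ℝ) * ∏ m, ε m := by
  rw [sgmat, Matrix.det_mul, Matrix.det_permutation, Matrix.det_diagonal]
  simp

lemma prod_flip2 {a b : Fin n} (hab : a ≠ b) :
    (∏ m, (if m = a ∨ m = b then (-1 : ℝ) else 1)) = 1 := by
  classical
  rw [← Finset.mul_prod_erase Finset.univ _ (Finset.mem_univ a),
    ← Finset.mul_prod_erase _ _ (Finset.mem_erase.2 ⟨hab.symm, Finset.mem_univ b⟩)]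
  rw [Finset.prod_eq_one (fun m hm => ?_)]
  · simp [hab.symm]
  · rcases Finset.mem_erase.1 hm with ⟨hmb, hm'⟩
    rcases Finset.mem_erase.1 hm' with ⟨hma, _⟩
    simp [hma, hmb]

lemma prod_flip1 (b : Fin n) :
    (∏ m, (if m = b then (-1 : ℝ) else 1)) = -1 := by
  classical
  rw [← Finset.mul_prod_erase Finset.univ _ (Finset.mem_univ b)]
  rw [Finset.prod_eq_one (fun m hm => ?_)]
  · simp
  · simp [(Finset.mem_erase.1 hm).1]

def ee (n : ℕ) (i : Fin n) : Fin n → ℝ := Pi.single i 1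

section helpers

variable (R : (Fin n → ℝ) →ₗ[ℝ] (Fin n → ℝ) →ₗ[ℝ] (Fin n → ℝ) →ₗ[ℝ] (Fin n → ℝ) →ₗ[ℝ] ℝ)

/-- abbreviation for basis values -/
noncomputable def Bf (i j k l : Fin n) : ℝ := R (ee n i) (ee n j) (ee n k) (ee n l)

variable (hinv : ∀ g : Matrix (Fin n) (Fin n) ℝ, gᵀ * g = 1 → g.det = 1 →
      ∀ u₁ u₂ u₃ u₄ : Fin n → ℝ,
        R (g *ᵥ u₁) (g *ᵥ u₂) (g *ᵥ u₃) (g *ᵥ u₄) = R u₁ u₂ u₃ u₄)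

include hinv in
lemma key_lemma (σ : Equiv.Perm (Fin n)) (ε : Fin n → ℝ) (hε : ∀ m, ε m = 1 ∨ ε m = -1)
    (hdet : (Equiv.Perm.sign σ : ℝ) * ∏ m, ε m = 1) (m₁ m₂ m₃ m₄ : Fin n) :
    (ε m₁ * ε m₂ * ε m₃ * ε m₄) * Bf R (σ m₁) (σ m₂) (σ m₃) (σ m₄) = Bf R m₁ m₂ m₃ m₄ := by
  have h := hinv (sgmat σ ε) (sgmat_orth σ ε hε) (by rw [sgmat_det]; exact hdet)
    (Pi.single m₁ 1) (Pi.single m₂ 1) (Pi.single m₃ 1) (Pi.single m₄ 1)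
  rw [sgmat_mulVec_single, sgmat_mulVec_single, sgmat_mulVec_single, sgmat_mulVec_single] at h
  simp only [_root_.map_smul, LinearMap.smul_apply, smul_eq_mul] at h
  simp only [Bf, ee]
  rw [← h]; ring

include hinv in
lemma flipR (a b : Fin n) (hab : a ≠ b) (i j k l : Fin n) :
    ((if i = a ∨ i = b then (-1:ℝ) else 1) * (if j = a ∨ j = b then (-1:ℝ) else 1) *
     (if k = a ∨ k = b then (-1:ℝ) else 1) * (if l = a ∨ l = b then (-1:ℝ) else 1)) *
      Bf R i j k l = Bf R i j k l := by
  have := key_lemma R hinv 1 (fun m => if m = a ∨ m = b then (-1:ℝ) else 1)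
    (fun m => by by_cases h : m = a ∨ m = b <;> simp [h]) (by simp [prod_flip2 hab])
    i j k l
  simpa using this

include hinv in
lemma rotR (a b : Fin n) (hab : a ≠ b) (i j k l : Fin n) :
    ((if i = b then (-1:ℝ) else 1) * (if j = b then (-1:ℝ) else 1) *
     (if k = b then (-1:ℝ) else 1) * (if l = b then (-1:ℝ) else 1)) *
      Bf R (Equiv.swap a b i) (Equiv.swap a b j) (Equiv.swap a b k) (Equiv.swap a b l)
      = Bf R i j k l := by
  exact key_lemma R hinv (Equiv.swap a b) (fun m => if m = b then (-1:ℝ) else 1)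
    (fun m => by by_cases h : m = b <;> simp [h])
    (by rw [prod_flip1, Equiv.Perm.sign_swap hab]; norm_num)
    i j k l

include hinv in
lemma zodd (a b : Fin n) (hab : a ≠ b) (i j k l : Fin n)
    (hsign : ((if i = a ∨ i = b then (-1:ℝ) else 1) * (if j = a ∨ j = b then (-1:ℝ) else 1) *
     (if k = a ∨ k = b then (-1:ℝ) else 1) * (if l = a ∨ l = b then (-1:ℝ) else 1)) = -1) :
    Bf R i j k l = 0 := by
  have := flipR R hinv a b hab i j k l
  rw [hsign] at this
  linarith

include hinv in
lemma move2 (i j j' : Fin n) (hij : i ≠ j) (hij' : i ≠ j') :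
    Bf R i j j i = Bf R i j' j' i := by
  by_cases hjj' : j = j'
  · rw [hjj']
  · have := rotR R hinv j j' hjj' i j j i
    rw [Equiv.swap_apply_of_ne_of_ne hij hij', Equiv.swap_apply_left] at this
    simp only [if_neg hij', if_neg hjj'] at this
    simpa using this.symm

include hinv in
lemma move1 (i i' j : Fin n) (hij : i ≠ j) (hi'j : i' ≠ j) :
    Bf R i j j i = Bf R i' j j i' := by
  by_cases hii' : i = i'
  · rw [hii']
  · have := rotR R hinv i i' hii' i j j i
    rw [Equiv.swap_apply_of_ne_of_ne (Ne.symm hij) hi'j.symm, Equiv.swap_apply_left] at this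
    simp only [if_neg hii', if_neg (fun h : j = i' => hi'j (h ▸ rfl))] at this
    simpa using this.symm

end helpers

section helpers2

variable (R : (Fin n → ℝ) →ₗ[ℝ] (Fin n → ℝ) →ₗ[ℝ] (Fin n → ℝ) →ₗ[ℝ] (Fin n → ℝ) →ₗ[ℝ] ℝ)
variable (ha : ∀ u₁ u₂ u₃ u₄ : Fin n → ℝ, R u₁ u₂ u₃ u₄ = -R u₂ u₁ u₃ u₄)
variable (hb : ∀ u₁ u₂ u₃ u₄ : Fin n → ℝ, R u₁ u₂ u₃ u₄ = -R u₁ u₂ u₄ u₃)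
variable (hc : ∀ u₁ u₂ u₃ u₄ : Fin n → ℝ,
      R u₁ u₂ u₃ u₄ + R u₁ u₃ u₄ u₂ + R u₁ u₄ u₂ u₃ = 0)
variable (hinv : ∀ g : Matrix (Fin n) (Fin n) ℝ, gᵀ * g = 1 → g.det = 1 →
      ∀ u₁ u₂ u₃ u₄ : Fin n → ℝ,
        R (g *ᵥ u₁) (g *ᵥ u₂) (g *ᵥ u₃) (g *ᵥ u₄) = R u₁ u₂ u₃ u₄)

include ha hb in
lemma swap12 (i j : Fin n) : Bf R i j j i = Bf R j i i j := by
  have h1 := ha (ee n i) (ee n j) (ee n j) (ee n i)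
  have h2 := hb (ee n j) (ee n i) (ee n j) (ee n i)
  simp only [Bf]
  linarith

include hb hc hinv in
lemma zdist (i j k l : Fin n) (hij : i ≠ j) (hik : i ≠ k) (hil : i ≠ l)
    (hjk : j ≠ k) (hjl : j ≠ l) (hkl : k ≠ l) : Bf R i j k l = 0 := by
  have r1 := rotR R hinv j k hjk i j k l
  rw [Equiv.swap_apply_of_ne_of_ne hij hik, Equiv.swap_apply_left, Equiv.swap_apply_right,
    Equiv.swap_apply_of_ne_of_ne (Ne.symm hjl) (Ne.symm hkl)] at r1
  rw [if_neg hik, if_neg hjk, if_pos rfl, if_neg (Ne.symm hkl)] at r1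
  have r2 := rotR R hinv j l hjl i j k l
  rw [Equiv.swap_apply_of_ne_of_ne hij hil, Equiv.swap_apply_left,
    Equiv.swap_apply_of_ne_of_ne (Ne.symm hjk) hkl, Equiv.swap_apply_right] at r2
  rw [if_neg hil, if_neg hjl, if_neg hkl, if_pos rfl] at r2
  have bi := hc (ee n i) (ee n j) (ee n k) (ee n l)
  have s1 := hb (ee n i) (ee n k) (ee n l) (ee n j)
  have s2 := hb (ee n i) (ee n l) (ee n j) (ee n k)
  simp only [Bf] at r1 r2 ⊢
  norm_num at r1 r2
  linarith

include ha hb hinv in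
lemma hsec (hn : 2 ≤ n) (i j : Fin n) (hij : i ≠ j) :
    Bf R i j j i = Bf R ⟨0, by omega⟩ ⟨1, by omega⟩ ⟨1, by omega⟩ ⟨0, by omega⟩ := by
  have h01 : (⟨0, by omega⟩ : Fin n) ≠ ⟨1, by omega⟩ := by simp [Fin.ext_iff]
  by_cases hj1 : j = ⟨1, by omega⟩
  · subst hj1
    exact move1 R hinv i ⟨0, by omega⟩ ⟨1, by omega⟩ hij h01
  · by_cases hi1 : i = ⟨1, by omega⟩
    · subst hi1
      rw [swap12 R ha hb]
      exact move1 R hinv j ⟨0, by omega⟩ ⟨1, by omega⟩ hj1 h01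
    · rw [move2 R hinv i j ⟨1, by omega⟩ hij hi1]
      exact move1 R hinv i ⟨0, by omega⟩ ⟨1, by omega⟩ hi1 h01

include ha hb hc hinv in
lemma Bval (hn : 2 ≤ n) (i j k l : Fin n) :
    Bf R i j k l = (Bf R ⟨0, by omega⟩ ⟨1, by omega⟩ ⟨1, by omega⟩ ⟨0, by omega⟩) *
      ((if j = k then (1:ℝ) else 0) * (if i = l then (1:ℝ) else 0) -
       (if i = k then (1:ℝ) else 0) * (if j = l then (1:ℝ) else 0)) := by
  by_cases hij : i = j
  · subst hij
    have h := ha (ee n i) (ee n i) (ee n k) (ee n l)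
    simp only [Bf]
    have : R (ee n i) (ee n i) (ee n k) (ee n l) = 0 := by linarith
    rw [this]; ring
  by_cases hkl : k = l
  · subst hkl
    have h := hb (ee n i) (ee n j) (ee n k) (ee n k)
    simp only [Bf]
    have : R (ee n i) (ee n j) (ee n k) (ee n k) = 0 := by linarith
    rw [this]; ring
  by_cases hik : i = k
  · subst hik
    by_cases hjl : j = l
    · subst hjl
      have h := hb (ee n i) (ee n j) (ee n i) (ee n j)
      have hs := hsec R ha hb hinv hn i j hij
      simp only [Bf] at hs h ⊢
      simp [hij, Ne.symm hij]
      linarith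
    · have h0 := zodd R hinv i j hij i j i l (by
        have hl : ¬(l = i ∨ l = j) := by
          push_neg; exact ⟨fun h => hkl h.symm, fun h => hjl h.symm⟩
        simp [hl])
      rw [h0]
      simp [hjl, Ne.symm hij]
  by_cases hjk : j = k
  · subst hjk
    by_cases hil : i = l
    · subst hil
      have hs := hsec R ha hb hinv hn i j hij
      simp only [Bf] at hs ⊢
      simp [hij]
      linarith
    · have h0 := zodd R hinv i j hij i j j l (by
        have hl : ¬(l = i ∨ l = j) := by
          push_neg; exact ⟨fun h => hil h.symm, fun h => hkl h.symm⟩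
        simp [hl])
      rw [h0]
      simp [hil, hkl]
  · by_cases hl : l = i ∨ l = j
    · have h0 := zodd R hinv i j hij i j k l (by
        have hk : ¬(k = i ∨ k = j) := by
          push_neg; exact ⟨fun h => hik h.symm, fun h => hjk h.symm⟩
        simp [hk, hl])
      rw [h0]
      simp [hjk, hik]
    · push_neg at hl
      have h0 := zdist R hb hc hinv i j k l hij hik (fun h => hl.1 h.symm) hjk
        (fun h => hl.2 h.symm) hkl
      rw [h0]
      simp [hjk, hik]

end helpers2

lemma ee_sum (u : Fin n → ℝ) : ∑ i, u i • ee n i = u := by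
  ext j
  simp only [Finset.sum_apply, Pi.smul_apply, ee, Pi.single_apply, smul_eq_mul, mul_ite,
    mul_one, mul_zero]
  rw [Finset.sum_ite_eq Finset.univ j u]
  simp

lemma expand_arg {M : Type*} [AddCommMonoid M] [Module ℝ M] (T : (Fin n → ℝ) →ₗ[ℝ] M)
    (u : Fin n → ℝ) : T u = ∑ i, u i • T (ee n i) := by
  conv_lhs => rw [← ee_sum u]
  rw [map_sum]
  simp only [_root_.map_smul]

lemma expandR (R : (Fin n → ℝ) →ₗ[ℝ] (Fin n → ℝ) →ₗ[ℝ] (Fin n → ℝ) →ₗ[ℝ] (Fin n → ℝ) →ₗ[ℝ] ℝ)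
    (u₁ u₂ u₃ u₄ : Fin n → ℝ) :
    R u₁ u₂ u₃ u₄ = ∑ i, ∑ j, ∑ k, ∑ l,
      u₁ i * u₂ j * u₃ k * u₄ l * Bf R i j k l := by
  rw [expand_arg R u₁]
  simp only [LinearMap.sum_apply, LinearMap.smul_apply, smul_eq_mul]
  refine Finset.sum_congr rfl fun i _ => ?_
  rw [expand_arg (R (ee n i)) u₂]
  simp only [LinearMap.sum_apply, LinearMap.smul_apply, smul_eq_mul, Finset.mul_sum]
  refine Finset.sum_congr rfl fun j _ => ?_
  rw [expand_arg (R (ee n i) (ee n j)) u₃]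
  simp only [LinearMap.sum_apply, LinearMap.smul_apply, smul_eq_mul, Finset.mul_sum]
  refine Finset.sum_congr rfl fun k _ => ?_
  rw [expand_arg (R (ee n i) (ee n j) (ee n k)) u₄]
  simp only [LinearMap.smul_apply, smul_eq_mul, Finset.mul_sum]
  refine Finset.sum_congr rfl fun l _ => ?_
  simp only [Bf]; ring

lemma sum_identity (lam : ℝ) (u₁ u₂ u₃ u₄ : Fin n → ℝ) :
    (∑ i, ∑ j, ∑ k, ∑ l, u₁ i * u₂ j * u₃ k * u₄ l *
      (lam * ((if j = k then (1:ℝ) else 0) * (if i = l then (1:ℝ) else 0) -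
       (if i = k then (1:ℝ) else 0) * (if j = l then (1:ℝ) else 0))))
    = lam * ((u₂ ⬝ᵥ u₃) * (u₁ ⬝ᵥ u₄) - (u₁ ⬝ᵥ u₃) * (u₂ ⬝ᵥ u₄)) := by
  simp only [mul_sub, mul_ite, ite_mul, mul_one, mul_zero, zero_mul, one_mul,
    Finset.sum_sub_distrib, Finset.sum_ite_eq, Finset.sum_ite_eq', Finset.mem_univ, if_true,
    dotProduct]
  simp only [Finset.mul_sum, Finset.sum_mul]
  congr 1
  · exact Finset.sum_congr rfl fun i _ => Finset.sum_congr rfl fun j _ => by ring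
  · rw [Finset.sum_comm]
    exact Finset.sum_congr rfl fun i _ => Finset.sum_congr rfl fun j _ => by ring

/-- An `SO(n)`-invariant quadrilinear map `R : (ℝⁿ)⁴ → ℝ` satisfying the
algebraic curvature identities is a scalar multiple of
`K(u₁,u₂,u₃,u₄) = ⟨u₂,u₃⟩⟨u₁,u₄⟩ − ⟨u₁,u₃⟩⟨u₂,u₄⟩`. -/
theorem stmt_3 (n : ℕ) (hn : 2 ≤ n)
    (R : (Fin n → ℝ) →ₗ[ℝ] (Fin n → ℝ) →ₗ[ℝ] (Fin n → ℝ) →ₗ[ℝ] (Fin n → ℝ) →ₗ[ℝ] ℝ)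
    (ha : ∀ u₁ u₂ u₃ u₄ : Fin n → ℝ, R u₁ u₂ u₃ u₄ = -R u₂ u₁ u₃ u₄)
    (hb : ∀ u₁ u₂ u₃ u₄ : Fin n → ℝ, R u₁ u₂ u₃ u₄ = -R u₁ u₂ u₄ u₃)
    (hc : ∀ u₁ u₂ u₃ u₄ : Fin n → ℝ,
      R u₁ u₂ u₃ u₄ + R u₁ u₃ u₄ u₂ + R u₁ u₄ u₂ u₃ = 0)
    (hinv : ∀ g : Matrix (Fin n) (Fin n) ℝ, gᵀ * g = 1 → g.det = 1 →
      ∀ u₁ u₂ u₃ u₄ : Fin n → ℝ,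
        R (g *ᵥ u₁) (g *ᵥ u₂) (g *ᵥ u₃) (g *ᵥ u₄) = R u₁ u₂ u₃ u₄) :
    ∃ lam : ℝ, ∀ u₁ u₂ u₃ u₄ : Fin n → ℝ,
      R u₁ u₂ u₃ u₄ = lam * ((u₂ ⬝ᵥ u₃) * (u₁ ⬝ᵥ u₄) - (u₁ ⬝ᵥ u₃) * (u₂ ⬝ᵥ u₄)) := by
  refine ⟨Bf R ⟨0, by omega⟩ ⟨1, by omega⟩ ⟨1, by omega⟩ ⟨0, by omega⟩, fun u₁ u₂ u₃ u₄ => ?_⟩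
  rw [expandR R u₁ u₂ u₃ u₄, ← sum_identity]
  refine Finset.sum_congr rfl fun i _ => Finset.sum_congr rfl fun j _ =>
    Finset.sum_congr rfl fun k _ => Finset.sum_congr rfl fun l _ => ?_
  rw [Bval R ha hb hc hinv hn i j k l]
end

section
/- Let n = 2 or n ≥ 4, and let T : ℝⁿ × ℝⁿ → ℝⁿ be a bilinear map that is skew-symmetric, i.e. T(u,v) = −T(v,u) for all u,v ∈ ℝⁿ, and SO(n)-equivariant, i.e. T(g·u, g·v) = g·T(u,v) for every g ∈ SO(n) and all u,v ∈ ℝⁿ. Then T = 0. -/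
open Matrix

private lemma diag_step {n : ℕ}
    (T : (Fin n → ℝ) →ₗ[ℝ] (Fin n → ℝ) →ₗ[ℝ] (Fin n → ℝ))
    (hinv : ∀ g : Matrix (Fin n) (Fin n) ℝ, gᵀ * g = 1 → g.det = 1 →
      ∀ u v : Fin n → ℝ, T (g *ᵥ u) (g *ᵥ v) = g *ᵥ T u v)
    (i j m : Fin n) (ε : Fin n → ℝ)
    (hsq : ∀ a, ε a = 1 ∨ ε a = -1) (hdet : ∏ a, ε a = 1)
    (hsign : ε i * ε j = - ε m) :
    T (Pi.single i 1) (Pi.single j 1) m = 0 := by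
  have hεsq : ∀ a, ε a * ε a = 1 := by
    intro a; rcases hsq a with h | h <;> rw [h] <;> ring
  have horth : (diagonal ε)ᵀ * diagonal ε = 1 := by
    rw [diagonal_transpose, diagonal_mul_diagonal]
    have h1 : (fun i => ε i * ε i) = (1 : Fin n → ℝ) := funext hεsq
    rw [h1]; exact diagonal_one
  have hdet' : (diagonal ε).det = 1 := by rw [det_diagonal]; exact hdet
  have hsingle : ∀ k : Fin n, diagonal ε *ᵥ Pi.single k 1 = ε k • (Pi.single k 1 : Fin n → ℝ) := by
    intro k; funext a
    simp only [mulVec_diagonal, Pi.smul_apply, smul_eq_mul, Pi.single_apply]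
    by_cases h : a = k <;> simp [h]
  have h := hinv (diagonal ε) horth hdet' (Pi.single i 1) (Pi.single j 1)
  simp only [hsingle, _root_.map_smul, LinearMap.smul_apply] at h
  have h' := congrFun h m
  simp only [Pi.smul_apply, smul_eq_mul, mulVec_diagonal] at h'
  have hre : ε j * (ε i * T (Pi.single i 1) (Pi.single j 1) m)
      = (ε i * ε j) * T (Pi.single i 1) (Pi.single j 1) m := by ring
  rw [hre, hsign] at h'
  rcases hsq m with hm | hm <;> rw [hm] at h' <;> linarith

private lemma prod_two_neg {n : ℕ} {l₁ l₂ : Fin n} (h : l₁ ≠ l₂) :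
    ∏ a, (if a = l₁ ∨ a = l₂ then (-1 : ℝ) else 1) = 1 := by
  have : ∀ a : Fin n, (if a = l₁ ∨ a = l₂ then (-1 : ℝ) else 1)
      = (if a = l₁ then (-1 : ℝ) else 1) * (if a = l₂ then (-1 : ℝ) else 1) := by
    intro a
    by_cases h1 : a = l₁ <;> by_cases h2 : a = l₂ <;> simp_all
  rw [Finset.prod_congr rfl (fun a _ => this a), Finset.prod_mul_distrib,
    Finset.prod_ite_eq' Finset.univ l₁ (fun _ => (-1 : ℝ)),
    Finset.prod_ite_eq' Finset.univ l₂ (fun _ => (-1 : ℝ))]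
  simp

/-- For `n = 2` or `n ≥ 4`, every skew-symmetric `SO(n)`-equivariant
bilinear map `T : ℝⁿ × ℝⁿ → ℝⁿ` vanishes. -/
theorem stmt_4 (n : ℕ) (hn : n = 2 ∨ 4 ≤ n)
    (T : (Fin n → ℝ) →ₗ[ℝ] (Fin n → ℝ) →ₗ[ℝ] (Fin n → ℝ))
    (hskew : ∀ u v : Fin n → ℝ, T u v = -T v u)
    (hinv : ∀ g : Matrix (Fin n) (Fin n) ℝ, gᵀ * g = 1 → g.det = 1 →
      ∀ u v : Fin n → ℝ, T (g *ᵥ u) (g *ᵥ v) = g *ᵥ T u v) :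
    T = 0 := by
  rcases hn with hn | hn
  · -- n = 2 : use g = -1
    subst hn
    have h1 : ((-1 : Matrix (Fin 2) (Fin 2) ℝ))ᵀ * (-1) = 1 := by
      simp
    have h2 : (-1 : Matrix (Fin 2) (Fin 2) ℝ).det = 1 := by
      simp [det_neg]
    refine LinearMap.ext fun u => LinearMap.ext fun v => ?_
    show T u v = 0
    have h := hinv (-1) h1 h2 u v
    simp only [neg_mulVec, one_mulVec, map_neg, LinearMap.neg_apply, neg_neg] at h
    have : (2 : ℝ) • T u v = 0 := by
      rw [two_smul]
      nth_rewrite 1 [h]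
      simp
    rcases smul_eq_zero.mp this with h0 | h0
    · exact absurd h0 (by norm_num)
    · exact h0
  · -- n ≥ 4
    apply LinearMap.ext_basis (Pi.basisFun ℝ (Fin n)) (Pi.basisFun ℝ (Fin n))
    intro i j
    simp only [Pi.basisFun_apply, LinearMap.zero_apply]
    by_cases hij : i = j
    · subst hij
      have h := hskew (Pi.single i 1) (Pi.single i 1)
      have : (2 : ℝ) • T (Pi.single i 1) (Pi.single i 1) = 0 := by
        rw [two_smul]; nth_rewrite 1 [h]; simp
      rcases smul_eq_zero.mp this with h0 | h0
      · exact absurd h0 (by norm_num)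
      · exact h0
    · funext m
      show T (Pi.single i 1) (Pi.single j 1) m = 0
      -- choose l ∉ {i, j, m}
      have hcard : ({i, j, m} : Finset (Fin n)).card < Fintype.card (Fin n) := by
        calc ({i, j, m} : Finset (Fin n)).card ≤ 3 := by
              apply le_trans (Finset.card_insert_le _ _)
              simp [Finset.card_insert_le]
              have := Finset.card_le_two (a := j) (b := m); omega
          _ < Fintype.card (Fin n) := by simp; omega
      obtain ⟨l, hl⟩ : ∃ l, l ∉ ({i, j, m} : Finset (Fin n)) := by
        by_contra hc
        push_neg at hc
        have : (Finset.univ : Finset (Fin n)) ⊆ {i, j, m} := fun x _ => hc x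
        exact absurd (Finset.card_le_card this) (by simp [hcard.not_ge, Finset.card_univ] at *; omega)
      simp only [Finset.mem_insert, Finset.mem_singleton, not_or] at hl
      obtain ⟨hli, hlj, hlm⟩ := hl
      -- choose the pair of sign flips
      by_cases hmi : m = i
      · subst hmi
        refine diag_step T hinv _ _ _ (fun a => if a = j ∨ a = l then (-1 : ℝ) else 1)
          (fun a => by split <;> simp) (prod_two_neg (Ne.symm hlj)) ?_
        have h1 : ¬(m = j ∨ m = l) := by push_neg; exact ⟨hij, fun h => hli h.symm⟩
        simp [h1, hij]
      · by_cases hmj : m = j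
        · subst hmj
          refine diag_step T hinv _ _ _ (fun a => if a = i ∨ a = l then (-1 : ℝ) else 1)
            (fun a => by split <;> simp) (prod_two_neg (Ne.symm hli)) ?_
          have h1 : ¬(m = i ∨ m = l) := by push_neg; exact ⟨fun h => hij h.symm, fun h => hlj h.symm⟩
          simp [h1, hij]
        · refine diag_step T hinv _ _ _ (fun a => if a = m ∨ a = l then (-1 : ℝ) else 1)
            (fun a => by split <;> simp) (prod_two_neg (Ne.symm hlm)) ?_
          have h1 : ¬(i = m ∨ i = l) := by push_neg; exact ⟨fun h => hmi h.symm, fun h => hli h.symm⟩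
          have h2 : ¬(j = m ∨ j = l) := by push_neg; exact ⟨fun h => hmj h.symm, fun h => hlj h.symm⟩
          simp [h1, h2]
end

section
/- Let T : ℝ³ × ℝ³ → ℝ³ be a bilinear map that is skew-symmetric, i.e. T(u,v) = −T(v,u) for all u,v ∈ ℝ³, and SO(3)-equivariant, i.e. T(g·u, g·v) = g·T(u,v) for every g ∈ SO(3) and all u,v ∈ ℝ³. Then there exists c ∈ ℝ such that T(u,v) = c·(u × v) for all u,v ∈ ℝ³, where u × v denotes the Euclidean cross product. -/
open Matrix

/-- Every skew-symmetric `SO(3)`-equivariant bilinear map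
`T : ℝ³ × ℝ³ → ℝ³` is a scalar multiple of the Euclidean cross product. -/
theorem stmt_5
    (T : (Fin 3 → ℝ) →ₗ[ℝ] (Fin 3 → ℝ) →ₗ[ℝ] (Fin 3 → ℝ))
    (hskew : ∀ u v : Fin 3 → ℝ, T u v = -T v u)
    (hinv : ∀ g : Matrix (Fin 3) (Fin 3) ℝ, gᵀ * g = 1 → g.det = 1 →
      ∀ u v : Fin 3 → ℝ, T (g *ᵥ u) (g *ᵥ v) = g *ᵥ T u v) :
    ∃ c : ℝ, ∀ u v : Fin 3 → ℝ, T u v = c • (crossProduct u v) := by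
  set e0 : Fin 3 → ℝ := ![1,0,0] with he0
  set e1 : Fin 3 → ℝ := ![0,1,0] with he1
  set e2 : Fin 3 → ℝ := ![0,0,1] with he2
  set c : ℝ := T e0 e1 2 with hc
  -- the diagonal rotation diag(-1,-1,1)
  have hDorth : (!![(-1:ℝ),0,0;0,-1,0;0,0,1])ᵀ * !![-1,0,0;0,-1,0;0,0,1] = 1 := by
    have h : (!![(-1:ℝ),0,0;0,-1,0;0,0,1])ᵀ = !![-1,0,0;0,-1,0;0,0,1] := by
      rw [Matrix.eta_fin_three (!![(-1:ℝ),0,0;0,-1,0;0,0,1])ᵀ]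
      simp [Matrix.vecHead, Matrix.vecTail]
    rw [h, Matrix.mul_fin_three, Matrix.one_fin_three]; norm_num
  have hDdet : (!![(-1:ℝ),0,0;0,-1,0;0,0,1]).det = 1 := by
    simp [Matrix.det_fin_three]
  have hd := hinv !![-1,0,0;0,-1,0;0,0,1] hDorth hDdet e0 e1
  have hge0 : (!![(-1:ℝ),0,0;0,-1,0;0,0,1]) *ᵥ e0 = -e0 := by
    funext i; fin_cases i <;>
      simp [Matrix.mulVec, dotProduct, Fin.sum_univ_three, he0]
  have hge1 : (!![(-1:ℝ),0,0;0,-1,0;0,0,1]) *ᵥ e1 = -e1 := by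
    funext i; fin_cases i <;>
      simp [Matrix.mulVec, dotProduct, Fin.sum_univ_three, he1]
  rw [hge0, hge1, map_neg, map_neg, LinearMap.neg_apply, neg_neg] at hd
  -- the first two components of `T e0 e1` vanish
  have h0 : T e0 e1 0 = 0 := by
    have h := congrFun hd 0
    simp [Matrix.mulVec, dotProduct, Fin.sum_univ_three] at h
    linarith
  have h1 : T e0 e1 1 = 0 := by
    have h := congrFun hd 1
    simp [Matrix.mulVec, dotProduct, Fin.sum_univ_three] at h
    linarith
  have h01 : T e0 e1 = c • e2 := by
    funext i; fin_cases i
    · simpa [he2] using h0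
    · simpa [he2] using h1
    · simp [hc, he2]
  -- the cyclic permutation rotation
  have hPorth : (!![(0:ℝ),0,1;1,0,0;0,1,0])ᵀ * !![0,0,1;1,0,0;0,1,0] = 1 := by
    have h : (!![(0:ℝ),0,1;1,0,0;0,1,0])ᵀ = !![0,1,0;0,0,1;1,0,0] := by
      rw [Matrix.eta_fin_three (!![(0:ℝ),0,1;1,0,0;0,1,0])ᵀ]
      simp [Matrix.vecHead, Matrix.vecTail]
    rw [h, Matrix.mul_fin_three, Matrix.one_fin_three]; norm_num
  have hPdet : (!![(0:ℝ),0,1;1,0,0;0,1,0]).det = 1 := by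
    simp [Matrix.det_fin_three]
  have hPe0 : (!![(0:ℝ),0,1;1,0,0;0,1,0]) *ᵥ e0 = e1 := by
    funext i; fin_cases i <;>
      simp [Matrix.mulVec, dotProduct, Fin.sum_univ_three, he0, he1]
  have hPe1 : (!![(0:ℝ),0,1;1,0,0;0,1,0]) *ᵥ e1 = e2 := by
    funext i; fin_cases i <;>
      simp [Matrix.mulVec, dotProduct, Fin.sum_univ_three, he1, he2]
  have hPe2 : (!![(0:ℝ),0,1;1,0,0;0,1,0]) *ᵥ e2 = e0 := by
    funext i; fin_cases i <;>
      simp [Matrix.mulVec, dotProduct, Fin.sum_univ_three, he2, he0]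
  have hPsmul : ∀ (x : Fin 3 → ℝ),
      (!![(0:ℝ),0,1;1,0,0;0,1,0]) *ᵥ (c • x) = c • ((!![(0:ℝ),0,1;1,0,0;0,1,0]) *ᵥ x) :=
    fun x => Matrix.mulVec_smul _ c x
  have h12 : T e1 e2 = c • e0 := by
    have h := hinv !![0,0,1;1,0,0;0,1,0] hPorth hPdet e0 e1
    rw [hPe0, hPe1, h01, hPsmul, hPe2] at h
    exact h
  have h20 : T e2 e0 = c • e1 := by
    have h := hinv !![0,0,1;1,0,0;0,1,0] hPorth hPdet e1 e2
    rw [hPe1, hPe2, h12, hPsmul, hPe0] at h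
    exact h
  have hdiag : ∀ u : Fin 3 → ℝ, T u u = 0 := by
    intro u
    have h := hskew u u
    funext i
    have h' := congrFun h i
    simp only [Pi.neg_apply, Pi.zero_apply] at h' ⊢
    linarith
  have h10 : T e1 e0 = -(c • e2) := by rw [hskew, h01]
  have h21 : T e2 e1 = -(c • e0) := by rw [hskew, h12]
  have h02 : T e0 e2 = -(c • e1) := by rw [hskew, h20]
  refine ⟨c, fun u v => ?_⟩
  have hu : u = u 0 • e0 + u 1 • e1 + u 2 • e2 := by
    funext i; fin_cases i <;> simp [he0, he1, he2]
  have hv : v = v 0 • e0 + v 1 • e1 + v 2 • e2 := by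
    funext i; fin_cases i <;> simp [he0, he1, he2]
  conv_lhs => rw [hu, hv]
  simp only [map_add, LinearMap.map_smul, LinearMap.add_apply, LinearMap.smul_apply,
    _root_.map_smul, hdiag e0, hdiag e1, hdiag e2, h01, h12, h20, h10, h21, h02,
    smul_zero, smul_neg, smul_smul]
  funext i
  fin_cases i <;>
    simp [cross_apply, he0, he1, he2] <;> ring
end

section
/- Let n ≥ 2 and let T : ℝⁿ × ℝⁿ → ℝⁿ be a bilinear map such that g · T(g⁻¹·u, g⁻¹·v) = T(u,v) for every g ∈ SL(n,ℝ) and all u, v ∈ ℝⁿ. Then T = 0. -/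
open Matrix

lemma diag_prod_aux {n : ℕ} (p q : Fin n) (hpq : p ≠ q) :
    ∏ m, (if m = p then (2:ℝ) else if m = q then 2⁻¹ else 1) = 1 := by
  rw [← Finset.mul_prod_erase Finset.univ _ (Finset.mem_univ p),
      ← Finset.mul_prod_erase _ _ (Finset.mem_erase.mpr ⟨Ne.symm hpq, Finset.mem_univ q⟩)]
  rw [Finset.prod_eq_one]
  · simp [hpq.symm]
  · intro m hm
    simp only [Finset.mem_erase] at hm
    simp [hm.1, hm.2.1]

/-- There is no nonzero `SL(n,ℝ)`-invariant bilinear map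
`T : ℝⁿ × ℝⁿ → ℝⁿ` for `n ≥ 2`. -/
theorem stmt_9 (n : ℕ) (hn : 2 ≤ n)
    (T : (Fin n → ℝ) →ₗ[ℝ] (Fin n → ℝ) →ₗ[ℝ] (Fin n → ℝ))
    (hinv : ∀ g : Matrix (Fin n) (Fin n) ℝ, g.det = 1 →
      ∀ u v : Fin n → ℝ, g *ᵥ T (g⁻¹ *ᵥ u) (g⁻¹ *ᵥ v) = T u v) :
    T = 0 := by
  -- key: for any diagonal matrix with nonzero entries and det 1, scaling relation
  have key : ∀ (d : Fin n → ℝ), (∀ m, d m ≠ 0) → (∏ m, d m = 1) →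
      ∀ i j k : Fin n,
        d k * ((d i)⁻¹ * (d j)⁻¹) * (T (Pi.single i 1) (Pi.single j 1)) k
          = (T (Pi.single i 1) (Pi.single j 1)) k := by
    intro d hd0 hd1 i j k
    have hdet : (diagonal d).det = 1 := by rw [det_diagonal]; exact hd1
    have hinvd : (diagonal d)⁻¹ = diagonal (fun m => (d m)⁻¹) := by
      apply Matrix.inv_eq_right_inv
      rw [diagonal_mul_diagonal]
      rw [show (fun m => d m * (d m)⁻¹) = (1 : Fin n → ℝ) from
        funext fun m => mul_inv_cancel₀ (hd0 m)]
      exact diagonal_one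
    have h1 : ∀ a : Fin n, (diagonal d)⁻¹ *ᵥ Pi.single a 1 = (d a)⁻¹ • (Pi.single a 1 : Fin n → ℝ) := by
      intro a
      rw [hinvd]
      funext m
      by_cases h : m = a <;> simp [mulVec_diagonal, Pi.single_apply, h]
    have := congrFun (hinv (diagonal d) hdet (Pi.single i 1) (Pi.single j 1)) k
    simp only [h1, _root_.map_smul, LinearMap.smul_apply] at this
    rw [mulVec_diagonal] at this
    simpa [mul_assoc, mul_comm, mul_left_comm] using this
  -- each basis coefficient vanishes
  have hbasis : ∀ i j, T (Pi.single i 1) (Pi.single j 1) = 0 := by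
    intro i j
    funext k
    -- choose p ≠ q such that the ratio d k * (d i)⁻¹ * (d j)⁻¹ ≠ 1
    have main : ∀ p q : Fin n, p ≠ q →
        (fun m => if m = p then (2:ℝ) else if m = q then 2⁻¹ else 1) k *
          (((fun m => if m = p then (2:ℝ) else if m = q then 2⁻¹ else 1) i)⁻¹ *
           ((fun m => if m = p then (2:ℝ) else if m = q then 2⁻¹ else 1) j)⁻¹) ≠ 1 →
        (T (Pi.single i 1) (Pi.single j 1)) k = 0 := by
      intro p q hpq hratio
      set d : Fin n → ℝ := fun m => if m = p then (2:ℝ) else if m = q then 2⁻¹ else 1 with hd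
      have hd0 : ∀ m, d m ≠ 0 := by
        intro m; simp only [hd]; split_ifs <;> norm_num
      have := key d hd0 (diag_prod_aux p q hpq) i j k
      rcases mul_eq_zero.mp (show (d k * ((d i)⁻¹ * (d j)⁻¹) - 1) *
          (T (Pi.single i 1) (Pi.single j 1)) k = 0 by linear_combination this) with h | h
      · exact absurd (by linarith : d k * ((d i)⁻¹ * (d j)⁻¹) = 1) hratio
      · exact h
    have h01 : (⟨0, by omega⟩ : Fin n) ≠ ⟨1, by omega⟩ := by
      intro h; simpa using congrArg Fin.val h
    by_cases hki : k = i <;> by_cases hkj : k = j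
    · -- k = i = j : take p = k, q = some other index
      by_cases h0 : k = ⟨0, by omega⟩
      · refine main k ⟨1, by omega⟩ (h0 ▸ h01) ?_
        simp only [← hki, ← hkj]
        norm_num [h0 ▸ h01]
      · refine main k ⟨0, by omega⟩ h0 ?_
        simp only [← hki, ← hkj]
        norm_num
    · -- k = i ≠ j : take p = j, q = k
      refine main j k (fun h => hkj h.symm) ?_
      simp only [← hki]
      norm_num [hkj, Ne.symm hkj]
    · -- k = j ≠ i : take p = i, q = k
      refine main i k (fun h => hki h.symm) ?_
      simp only [← hkj]
      norm_num [hki, Ne.symm hki]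
    · -- k ∉ {i,j} : take p = k, q = i
      refine main k i hki ?_
      by_cases hij : i = j
      · simp only [← hij]
        norm_num [hki, Ne.symm hki]
      · norm_num [hki, hkj, hij, Ne.symm hki, Ne.symm hkj, Ne.symm hij]
  apply Module.Basis.ext (Pi.basisFun ℝ (Fin n))
  intro i
  apply Module.Basis.ext (Pi.basisFun ℝ (Fin n))
  intro j
  simp [Pi.basisFun_apply, hbasis]
end

section
/- Let n₁, n₂ ≥ 1 and n = n₁ + n₂, and write ℝⁿ = ℝ^{n₁} × ℝ^{n₂}, with π₁, π₂ the corresponding projections and ⟨·,·⟩ the standard inner product on ℝⁿ. Define the bilinear maps K, K₁, K₂ : ℝⁿ × ℝⁿ → gl(n,ℝ) by K(u,v)(w) = ⟨v,w⟩u − ⟨u,w⟩v, K₁(u,v)(w) = ⟨π₁v, π₁w⟩·(π₁u, 0) − ⟨π₁u, π₁w⟩·(π₁v, 0), and K₂(u,v)(w) = ⟨π₂v, π₂w⟩·(0, π₂u) − ⟨π₂u, π₂w⟩·(0, π₂v). Let a, b, c ∈ ℝ and suppose that for all u, v ∈ ℝⁿ the endomorphism a·K(u,v) + b·K₁(u,v)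 + c·K₂(u,v) maps the subspace ℝ^{n₁} × {0} into itself and the subspace {0} × ℝ^{n₂} into itself. Then a = 0. -/
open Matrix

/-- The constant-curvature algebraic curvature tensor `K(u,v)w = ⟨v,w⟩u − ⟨u,w⟩v` on
`ℝⁿ = ℝ^{n₁} × ℝ^{n₂}`, with the standard inner product `⟨u,v⟩ = ⟨π₁u,π₁v⟩ + ⟨π₂u,π₂v⟩`. -/
def prodK (n₁ n₂ : ℕ) (u v w : (Fin n₁ → ℝ) × (Fin n₂ → ℝ)) :
    (Fin n₁ → ℝ) × (Fin n₂ → ℝ) :=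
  (v.1 ⬝ᵥ w.1 + v.2 ⬝ᵥ w.2) • u - (u.1 ⬝ᵥ w.1 + u.2 ⬝ᵥ w.2) • v

/-- The analogue `K₁` of `K` on the first factor `ℝ^{n₁}`:
`K₁(u,v)w = ⟨π₁v,π₁w⟩(π₁u,0) − ⟨π₁u,π₁w⟩(π₁v,0)`. -/
def prodK₁ (n₁ n₂ : ℕ) (u v w : (Fin n₁ → ℝ) × (Fin n₂ → ℝ)) :
    (Fin n₁ → ℝ) × (Fin n₂ → ℝ) :=
  ((v.1 ⬝ᵥ w.1) • u.1 - (u.1 ⬝ᵥ w.1) • v.1, 0)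

/-- The analogue `K₂` of `K` on the second factor `ℝ^{n₂}`:
`K₂(u,v)w = ⟨π₂v,π₂w⟩(0,π₂u) − ⟨π₂u,π₂w⟩(0,π₂v)`. -/
def prodK₂ (n₁ n₂ : ℕ) (u v w : (Fin n₁ → ℝ) × (Fin n₂ → ℝ)) :
    (Fin n₁ → ℝ) × (Fin n₂ → ℝ) :=
  (0, (v.2 ⬝ᵥ w.2) • u.2 - (u.2 ⬝ᵥ w.2) • v.2)

/-- If the combination `a·K + b·K₁ + c·K₂` preserves both subspaces
`ℝ^{n₁} × {0}` and `{0} × ℝ^{n₂}` (i.e. takes values in `𝔬(n₁) ⊕ 𝔬(n₂)`), then `a = 0`. -/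
theorem stmt_16 (n₁ n₂ : ℕ) (h₁ : 1 ≤ n₁) (h₂ : 1 ≤ n₂) (a b c : ℝ)
    (h : ∀ u v w : (Fin n₁ → ℝ) × (Fin n₂ → ℝ),
      (w.2 = 0 →
        (a • prodK n₁ n₂ u v w + b • prodK₁ n₁ n₂ u v w + c • prodK₂ n₁ n₂ u v w).2 = 0) ∧
      (w.1 = 0 →
        (a • prodK n₁ n₂ u v w + b • prodK₁ n₁ n₂ u v w + c • prodK₂ n₁ n₂ u v w).1 = 0)) :
    a = 0 := by
  set e : Fin n₁ → ℝ := Pi.single ⟨0, h₁⟩ 1 with he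
  set f : Fin n₂ → ℝ := Pi.single ⟨0, h₂⟩ 1 with hf
  have key := (h (e, 0) (0, f) (e, 0)).1 rfl
  have hee : e ⬝ᵥ e = 1 := by
    simp [he, dotProduct, Pi.single_apply]
  have : (-a) • f = 0 := by
    simpa [prodK, prodK₁, prodK₂, hee, Prod.ext_iff, smul_smul, neg_smul] using key
  have hf0 : f ⟨0, h₂⟩ = 1 := by simp [hf]
  have h2 := congrFun this ⟨0, h₂⟩
  simp [hf0] at h2
  linarith
end
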